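/- arXiv:2510.12456 — 4 statements merged into one kernel-verified Lean document; each statement's English description precedes it below -/
import Mathlib

section
/- Let g : ℝ → ℝ be Lipschitz continuous with g(r) ≥ m for all r ∈ [0,1], where m > 0, let x₀ ∈ [0,1], and set s_f = ∫₀^{x₀} dr/g(r). Then there exists a unique differentiable function x̂ : [0, s_f] → [0,1] with x̂(0) = x₀ and x̂'(s) = −g(x̂(s)) for all s ∈ [0, s_f]; moreover x̂ is strictly decreasing, x̂(s_f) = 0, and ∫_{x̂(s)}^{x₀} dr/g(r) = s for every s ∈ [0, s_f]. -/
open MeasureTheory Set Filter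

/-!
Extend `g` from `[0,1]` to a continuous `v` on `ℝ` with `m ≤ v ≤ M`, and let
`T(x) = ∫_x^{x₀} dr/v(r)`. Separation of variables: along any solution of `y' = -v(y)` one has
`d/ds T(y(s)) = 1`, so `T(y(s)) = s`; as `T` is strictly decreasing this gives uniqueness. Since
`1/v ≥ 1/M`, `T` is a bijection of `ℝ`, and by the inverse function rule its inverse solves the
equation. On `[0, s_f]` this inverse stays in `[0,1]`, where `v = g`.
-/

section Primitive

variable {f : ℝ → ℝ} {c a : ℝ}

theorem mul_sub_le_integral_of_le (hf : Continuous f) (hfc : ∀ t, c ≤ f t) {x : ℝ}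
    (hx : a ≤ x) : c * (x - a) ≤ ∫ t in a..x, f t := by
  have := intervalIntegral.integral_mono_on hx (intervalIntegrable_const (μ := volume))
    (hf.intervalIntegrable a x) fun t _ => hfc t
  simpa [mul_comm] using this

theorem surjective_integral_of_le (hc : 0 < c) (hf : Continuous f) (hfc : ∀ t, c ≤ f t)
    (a : ℝ) : Function.Surjective fun x => ∫ t in a..x, f t := by
  have h_lin : Tendsto (fun x => c * (x - a)) atTop atTop :=
    (tendsto_atTop_add_const_right _ (-a) tendsto_id).const_mul_atTop hc
  have h_lin' : Tendsto (fun x => c * (x - a)) atBot atBot :=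
    (tendsto_atBot_add_const_right _ (-a) tendsto_id).const_mul_atBot hc
  refine Continuous.surjective (intervalIntegral.continuous_primitive
    (fun _ _ => hf.intervalIntegrable _ _) a) ?_ ?_
  · refine tendsto_atTop_mono' _ ?_ h_lin
    filter_upwards [eventually_ge_atTop a] with x hx using mul_sub_le_integral_of_le hf hfc hx
  · refine tendsto_atBot_mono' _ ?_ h_lin'
    filter_upwards [eventually_le_atBot a] with x hx
    rw [intervalIntegral.integral_symm]
    linarith [mul_sub_le_integral_of_le hf hfc hx]

end Primitive

noncomputable def travelTime (v : ℝ → ℝ) (x₀ x : ℝ) : ℝ := ∫ r in x..x₀, 1 / v r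

section TravelTime

variable {v w : ℝ → ℝ} {x₀ : ℝ}

@[simp]
theorem travelTime_self : travelTime v x₀ x₀ = 0 := intervalIntegral.integral_same

theorem travelTime_congr {x : ℝ} (h : EqOn v w (uIcc x x₀)) :
    travelTime v x₀ x = travelTime w x₀ x :=
  intervalIntegral.integral_congr fun r hr => by rw [h hr]

theorem hasDerivAt_travelTime (hv : Continuous v) (hv0 : ∀ r, v r ≠ 0) (x : ℝ) :
    HasDerivAt (travelTime v x₀) (-(1 / v x)) x :=
  have hcont : Continuous fun r => 1 / v r := continuous_const.div hv hv0
  intervalIntegral.integral_hasDerivAt_left (hcont.intervalIntegrable _ _)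
    hcont.aestronglyMeasurable.stronglyMeasurableAtFilter hcont.continuousAt

theorem strictAnti_travelTime (hv : Continuous v) (hv_pos : ∀ r, 0 < v r) :
    StrictAnti (travelTime v x₀) :=
  strictAnti_of_hasDerivAt_neg (hasDerivAt_travelTime hv fun r => (hv_pos r).ne') fun x => by
    simpa using hv_pos x

theorem surjective_travelTime {M : ℝ} (hv : Continuous v) (hv_pos : ∀ r, 0 < v r)
    (hM : ∀ r, v r ≤ M) : Function.Surjective (travelTime v x₀) := by
  have hM_pos : 0 < 1 / M := one_div_pos.2 ((hv_pos 0).trans_le (hM 0))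
  intro s
  obtain ⟨x, hx⟩ := surjective_integral_of_le (f := fun r => 1 / v r) hM_pos
    (continuous_const.div hv fun r => (hv_pos r).ne')
    (fun r => one_div_le_one_div_of_le (hv_pos r) (hM r)) x₀ (-s)
  exact ⟨x, by rw [travelTime, intervalIntegral.integral_symm]; exact neg_eq_iff_eq_neg.2 hx⟩

theorem exists_continuous_strictAnti_rightInverse_travelTime {M : ℝ} (hv : Continuous v)
    (hv_pos : ∀ r, 0 < v r) (hM : ∀ r, v r ≤ M) (x₀ : ℝ) :
    ∃ X : ℝ → ℝ, Continuous X ∧ StrictAnti X ∧ Function.RightInverse X (travelTime v x₀) := by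
  let e : ℝ ≃o ℝ := StrictMono.orderIsoOfSurjective (fun x => -travelTime v x₀ x)
    (strictAnti_travelTime hv hv_pos).neg
    (neg_surjective.comp (surjective_travelTime hv hv_pos hM))
  refine ⟨fun s => e.symm (-s), e.symm.continuous.comp continuous_neg,
    e.symm.strictMono.comp_strictAnti fun _ _ => neg_lt_neg, fun s => ?_⟩
  exact neg_inj.1 (e.apply_symm_apply (-s))

theorem hasDerivAt_of_rightInverse_travelTime {X : ℝ → ℝ} (hv : Continuous v) (hv0 : ∀ r, v r ≠ 0)
    (hX : Continuous X) (hXt : Function.RightInverse X (travelTime v x₀)) (s : ℝ) :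
    HasDerivAt X (-v (X s)) s := by
  have := (hasDerivAt_travelTime hv hv0 (X s)).of_local_left_inverse hX.continuousAt
    (by simpa using hv0 (X s)) (Eventually.of_forall hXt)
  simpa using this

theorem travelTime_eq_of_hasDerivWithinAt {y : ℝ → ℝ} {T : ℝ} (hv : Continuous v)
    (hv0 : ∀ r, v r ≠ 0) (hy : ∀ s ∈ Icc 0 T, HasDerivWithinAt y (-v (y s)) (Icc 0 T) s)
    {s : ℝ} (hs : s ∈ Icc 0 T) :
    travelTime v (y 0) (y s) = s := by
  let ψ := fun t => travelTime v (y 0) (y t) - t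
  have hψ_deriv : ∀ t ∈ Icc 0 T, HasDerivWithinAt ψ 0 (Icc 0 T) t := fun t ht => by
    have := ((hasDerivAt_travelTime (x₀ := y 0) hv hv0 (y t)).comp_hasDerivWithinAt t
      (hy t ht)).sub (hasDerivWithinAt_id t (Icc 0 T))
    exact this.congr_deriv (by rw [neg_mul_neg, one_div_mul_cancel (hv0 (y t)), sub_self])
  have hψ_const := constant_of_has_deriv_right_zero
    (fun t ht => (hψ_deriv t ht).continuousWithinAt)
    (fun t ht => (hψ_deriv t (Ico_subset_Icc_self ht)).mono_of_mem_nhdsWithin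
      (Icc_mem_nhdsGE_of_mem ht)) s hs
  simpa [ψ, sub_eq_zero] using hψ_const

end TravelTime

theorem ContinuousOn.exists_bounded_extension_of_Icc {g : ℝ → ℝ} {a b m : ℝ} (hab : a ≤ b)
    (hg : ContinuousOn g (Icc a b)) (hgm : ∀ r ∈ Icc a b, m ≤ g r) :
    ∃ v : ℝ → ℝ, Continuous v ∧ EqOn v g (Icc a b) ∧ (∀ r, m ≤ v r) ∧ ∃ M, ∀ r, v r ≤ M := by
  have hg' : Continuous ((Icc a b).domRestrict g) := hg.domRestrict
  obtain ⟨M, hM⟩ := (isCompact_range hg').bddAbove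
  refine ⟨IccExtend hab ((Icc a b).domRestrict g), hg'.Icc_extend',
    fun r hr => IccExtend_of_mem _ _ hr, fun r => hgm _ (projIcc a b hab r).2, M, fun r => hM ?_⟩
  rw [← IccExtend_range hab]
  exact mem_range_self r

/-- for a Lipschitz velocity `g` with `g ≥ m > 0` on `[0,1]`,
`x₀ ∈ [0,1]`, and `s_f = ∫₀^{x₀} dr/g(r)`, there is a unique differentiable
function `x̂ : [0,s_f] → [0,1]` with `x̂(0) = x₀` and `x̂'(s) = −g(x̂(s))`;
moreover `x̂` is strictly decreasing, `x̂(s_f) = 0`, and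
`∫_{x̂(s)}^{x₀} dr/g(r) = s` for every `s ∈ [0,s_f]`. -/
theorem stmt_12 (g : ℝ → ℝ) (K : NNReal) (hg : LipschitzWith K g)
    (m : ℝ) (hm : 0 < m) (hgm : ∀ r ∈ Set.Icc (0:ℝ) 1, m ≤ g r)
    (x₀ : ℝ) (hx₀ : x₀ ∈ Set.Icc (0:ℝ) 1)
    (sf : ℝ) (hsf : sf = ∫ r in (0:ℝ)..x₀, 1 / g r) :
    ∃ xhat : ℝ → ℝ,
      xhat 0 = x₀ ∧
      (∀ s ∈ Set.Icc 0 sf, xhat s ∈ Set.Icc (0:ℝ) 1) ∧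
      (∀ s ∈ Set.Icc 0 sf,
        HasDerivWithinAt xhat (-(g (xhat s))) (Set.Icc 0 sf) s) ∧
      StrictAntiOn xhat (Set.Icc 0 sf) ∧
      xhat sf = 0 ∧
      (∀ s ∈ Set.Icc 0 sf, ∫ r in (xhat s)..x₀, 1 / g r = s) ∧
      (∀ y : ℝ → ℝ, y 0 = x₀ →
        (∀ s ∈ Set.Icc 0 sf, y s ∈ Set.Icc (0:ℝ) 1) →
        (∀ s ∈ Set.Icc 0 sf,
          HasDerivWithinAt y (-(g (y s))) (Set.Icc 0 sf) s) →
        ∀ s ∈ Set.Icc 0 sf, y s = xhat s) := by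
  obtain ⟨v, hv, hvg, hvm, M, hvM⟩ :=
    hg.continuous.continuousOn.exists_bounded_extension_of_Icc zero_le_one hgm
  have hv_pos : ∀ r, 0 < v r := fun r => hm.trans_le (hvm r)
  have hv0 : ∀ r, v r ≠ 0 := fun r => (hv_pos r).ne'
  obtain ⟨X, hX, hX_anti, hX_time⟩ :=
    exists_continuous_strictAnti_rightInverse_travelTime hv hv_pos hvM x₀
  have h_inj := (strictAnti_travelTime (x₀ := x₀) hv hv_pos).injective
  have hX0 : X 0 = x₀ := h_inj (by rw [hX_time, travelTime_self])
  have hXsf : X sf = 0 := h_inj <| by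
    rw [hX_time, hsf, travelTime_congr (hvg.mono (uIcc_subset_Icc ⟨le_rfl, zero_le_one⟩ hx₀))]
    rfl
  have hX_mem : ∀ s ∈ Icc 0 sf, X s ∈ Icc (0 : ℝ) 1 := fun s hs =>
    ⟨hXsf ▸ hX_anti.antitone hs.2, hX0 ▸ hX_anti.antitone hs.1 |>.trans hx₀.2⟩
  refine ⟨X, hX0, hX_mem, fun s hs => ?_, hX_anti.strictAntiOn _, hXsf, fun s hs => ?_, ?_⟩
  · rw [← hvg (hX_mem s hs)]
    exact (hasDerivAt_of_rightInverse_travelTime hv hv0 hX hX_time s).hasDerivWithinAt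
  · change travelTime g x₀ (X s) = s
    rw [← travelTime_congr (hvg.mono (uIcc_subset_Icc (hX_mem s hs) hx₀)), hX_time]
  · intro y hy0 hy_mem hy s hs
    refine h_inj ?_
    rw [hX_time, ← hy0]
    refine travelTime_eq_of_hasDerivWithinAt hv hv0 (fun t ht => ?_) hs
    rw [hvg (hy_mem t ht)]
    exact hy t ht
end

section
/- Let γ > 0, ε ∈ {−1, 1}, and m_μ, m_λ > 0, and let μ, λ : [0,1] → ℝ be continuous with μ(r) ≥ m_μ and λ(r) ≥ m_λ for all r ∈ [0,1]. Let s_f ≥ 0 and let x̂, ξ̂ : [0, s_f] → [0,1] be differentiable with x̂'(s) = −μ(x̂(s)) and ξ̂'(s) = λ(ξ̂(s)) for all s. Define Φ(a,b) = exp(a e^{−γε}) − exp(b e^{γε}) + exp(e^γ). Then Φ(x̂(s), ξ̂(s)) ≥ 0 for all s ∈ [0, s_f], and for every integer ℓ ≥ 0: ∫₀^{s_f} Φ(x̂(s), ξ̂(s))^ℓ ds ≤ (e^γ / (m_μ + m_λ)) · Φ(x̂(0), ξ̂(0))^{ℓ+1} / (ℓ+1). -/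
/-!
Write `g(s) = Φ(x̂(s), ξ̂(s))`. Because `|γε| ≤ γ`, on `[0, s_f]` we have `g ≥ 1`, and along
the characteristics `g' ≤ -c` with `c = (m_μ + m_λ) e^{-γ}`. Hence `(g^{ℓ+1})' ≤ -c (ℓ+1) g^ℓ`,
and integrating gives `c (ℓ+1) ∫ g^ℓ ≤ g(0)^{ℓ+1} - g(s_f)^{ℓ+1} ≤ g(0)^{ℓ+1}`.
-/

open Real Set

theorem exp_neg_le_exp_mul_exp_mul {γ κ x : ℝ} (hκ : |κ| ≤ γ) (hx : 0 ≤ x) :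
    exp (-γ) ≤ exp κ * exp (x * exp κ) :=
  calc exp (-γ) ≤ exp κ * 1 := by
        rw [mul_one, exp_le_exp]; linarith [neg_abs_le κ]
    _ ≤ exp κ * exp (x * exp κ) := by gcongr; exact one_le_exp (by positivity)

theorem one_le_weight {γ κ a b : ℝ} (hκ : |κ| ≤ γ) (ha : 0 ≤ a) (hb : b ≤ 1) :
    1 ≤ exp (a * exp (-κ)) - exp (b * exp κ) + exp (exp γ) := by
  have hleft : 1 ≤ exp (a * exp (-κ)) := one_le_exp (by positivity)
  have hright : exp (b * exp κ) ≤ exp (exp γ) := by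
    rw [exp_le_exp]
    calc b * exp κ ≤ 1 * exp κ := by gcongr
      _ ≤ exp γ := by rw [one_mul, exp_le_exp]; exact (le_abs_self κ).trans hκ
  linarith

theorem weight_deriv_le_neg {γ κ a b μ lam mμ mlam : ℝ} (hκ : |κ| ≤ γ) (ha : 0 ≤ a)
    (hb : 0 ≤ b) (hmμ : 0 ≤ mμ) (hμ : mμ ≤ μ) (hmlam : 0 ≤ mlam) (hlam : mlam ≤ lam) :
    -μ * exp (-κ) * exp (a * exp (-κ)) - lam * exp κ * exp (b * exp κ)
      ≤ -((mμ + mlam) * exp (-γ)) := by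
  have hx := exp_neg_le_exp_mul_exp_mul (γ := γ) (κ := -κ) (by rwa [abs_neg]) ha
  have hξ := exp_neg_le_exp_mul_exp_mul hκ hb
  have hμx : mμ * exp (-γ) ≤ μ * (exp (-κ) * exp (a * exp (-κ))) :=
    mul_le_mul hμ hx (exp_pos _).le (hmμ.trans hμ)
  have hlamξ : mlam * exp (-γ) ≤ lam * (exp κ * exp (b * exp κ)) :=
    mul_le_mul hlam hξ (exp_pos _).le (hmlam.trans hlam)
  linarith

theorem integral_pow_le_of_deriv_le_neg {g g' : ℝ → ℝ} {a b c : ℝ} (hab : a ≤ b)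
    (hc : 0 < c) (hcont : ContinuousOn g (Icc a b)) (hderiv : ∀ x ∈ Ioo a b, HasDerivAt g (g' x) x)
    (hg' : ∀ x ∈ Ioo a b, g' x ≤ -c) (hg : ∀ x ∈ Icc a b, 0 ≤ g x) (ℓ : ℕ) :
    ∫ x in a..b, g x ^ ℓ ≤ g a ^ (ℓ + 1) / (c * (ℓ + 1)) := by
  have hFTC : g b ^ (ℓ + 1) - g a ^ (ℓ + 1) ≤ ∫ x in a..b, -(c * (ℓ + 1)) * g x ^ ℓ := by
    refine intervalIntegral.sub_le_integral_of_hasDeriv_right_of_le hab (hcont.pow _)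
      (fun x hx => ((hderiv x hx).pow _).hasDerivWithinAt)
      ((continuousOn_const.mul (hcont.pow ℓ)).integrableOn_Icc) fun x hx => ?_
    have hpow : 0 ≤ g x ^ ℓ := pow_nonneg (hg x (Ioo_subset_Icc_self hx)) ℓ
    have hℓ : (0 : ℝ) ≤ ℓ + 1 := by positivity
    have hslack : 0 ≤ -c - g' x := by linarith [hg' x hx]
    push_cast
    nlinarith [mul_nonneg (mul_nonneg hℓ hpow) hslack]
  rw [intervalIntegral.integral_const_mul] at hFTC
  rw [le_div_iff₀ (by positivity)]
  nlinarith [pow_nonneg (hg b (right_mem_Icc.2 hab)) (ℓ + 1)]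

theorem stmt_14_general (γ ε mmu mlam : ℝ) (hγ : 0 < γ) (hε : ε = -1 ∨ ε = 1)
    (hmmu : 0 < mmu) (hmlam : 0 < mlam)
    (mu lam : ℝ → ℝ)
    (hmub : ∀ r ∈ Set.Icc (0:ℝ) 1, mmu ≤ mu r)
    (hlamb : ∀ r ∈ Set.Icc (0:ℝ) 1, mlam ≤ lam r)
    (sf : ℝ) (hsf : 0 ≤ sf)
    (xhat ξhat : ℝ → ℝ)
    (hxr : ∀ s ∈ Set.Icc 0 sf, xhat s ∈ Set.Icc (0:ℝ) 1)
    (hξr : ∀ s ∈ Set.Icc 0 sf, ξhat s ∈ Set.Icc (0:ℝ) 1)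
    (hxd : ∀ s ∈ Set.Icc 0 sf,
      HasDerivWithinAt xhat (-(mu (xhat s))) (Set.Icc 0 sf) s)
    (hξd : ∀ s ∈ Set.Icc 0 sf,
      HasDerivWithinAt ξhat (lam (ξhat s)) (Set.Icc 0 sf) s)
    (Φ : ℝ → ℝ → ℝ)
    (hΦ : ∀ a b : ℝ, Φ a b =
      Real.exp (a * Real.exp (-γ * ε)) - Real.exp (b * Real.exp (γ * ε)) +
        Real.exp (Real.exp γ)) :
    (∀ s ∈ Set.Icc 0 sf, 0 ≤ Φ (xhat s) (ξhat s)) ∧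
    ∀ ℓ : ℕ, ∫ s in (0:ℝ)..sf, (Φ (xhat s) (ξhat s)) ^ ℓ
      ≤ (Real.exp γ / (mmu + mlam)) * (Φ (xhat 0) (ξhat 0)) ^ (ℓ + 1) / (ℓ + 1) := by
  set κ := γ * ε
  have hκ : |κ| ≤ γ := by rcases hε with rfl | rfl <;> simp [κ, abs_of_pos hγ]
  have hΦκ : ∀ a b, Φ a b = exp (a * exp (-κ)) - exp (b * exp κ) + exp (exp γ) := by
    intro a b; rw [hΦ, neg_mul]
  have hΦ_ge_one : ∀ s ∈ Icc 0 sf, 1 ≤ Φ (xhat s) (ξhat s) := fun s hs => by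
    rw [hΦκ]; exact one_le_weight hκ (hxr s hs).1 (hξr s hs).2
  have hderiv : ∀ s ∈ Icc 0 sf, HasDerivWithinAt (fun s => Φ (xhat s) (ξhat s))
      (-mu (xhat s) * exp (-κ) * exp (xhat s * exp (-κ))
        - lam (ξhat s) * exp κ * exp (ξhat s * exp κ)) (Icc 0 sf) s := fun s hs => by
    simp only [hΦκ]
    refine ((((hxd s hs).mul_const _).exp.sub ((hξd s hs).mul_const _).exp).add_const _
      ).congr_deriv ?_
    ring
  have hderiv_le : ∀ s ∈ Icc 0 sf,
      -mu (xhat s) * exp (-κ) * exp (xhat s * exp (-κ))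
        - lam (ξhat s) * exp κ * exp (ξhat s * exp κ) ≤ -((mmu + mlam) * exp (-γ)) :=
    fun s hs => weight_deriv_le_neg hκ (hxr s hs).1 (hξr s hs).1
      hmmu.le (hmub _ (hxr s hs)) hmlam.le (hlamb _ (hξr s hs))
  refine ⟨fun s hs => zero_le_one.trans (hΦ_ge_one s hs), fun ℓ => ?_⟩
  calc ∫ s in (0:ℝ)..sf, Φ (xhat s) (ξhat s) ^ ℓ
      ≤ Φ (xhat 0) (ξhat 0) ^ (ℓ + 1) / ((mmu + mlam) * exp (-γ) * (ℓ + 1)) :=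
        integral_pow_le_of_deriv_le_neg hsf (by positivity)
          (fun s hs => (hderiv s hs).continuousWithinAt)
          (fun s hs => (hderiv s (Ioo_subset_Icc_self hs)).hasDerivAt (Icc_mem_nhds hs.1 hs.2))
          (fun s hs => hderiv_le s (Ioo_subset_Icc_self hs))
          (fun s hs => zero_le_one.trans (hΦ_ge_one s hs)) ℓ
    _ = exp γ / (mmu + mlam) * Φ (xhat 0) (ξhat 0) ^ (ℓ + 1) / (ℓ + 1) := by
        rw [exp_neg]; field_simp

/-- along the characteristic projections `x̂' = −μ(x̂)`,
`ξ̂' = λ(ξ̂)` of the K-kernel equation, the weight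
`Φ(a,b) = exp(a e^{−γε}) − exp(b e^{γε}) + exp(e^γ)` is nonnegative and
satisfies, for every integer `ℓ ≥ 0`,
`∫₀^{s_f} Φ(x̂(s),ξ̂(s))^ℓ ds ≤ (e^γ/(m_μ+m_λ)) Φ(x̂(0),ξ̂(0))^{ℓ+1}/(ℓ+1)`. -/
theorem stmt_14 (γ ε mmu mlam : ℝ) (hγ : 0 < γ) (hε : ε = -1 ∨ ε = 1)
    (hmmu : 0 < mmu) (hmlam : 0 < mlam)
    (mu lam : ℝ → ℝ)
    (hmuc : ContinuousOn mu (Set.Icc (0:ℝ) 1))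
    (hlamc : ContinuousOn lam (Set.Icc (0:ℝ) 1))
    (hmub : ∀ r ∈ Set.Icc (0:ℝ) 1, mmu ≤ mu r)
    (hlamb : ∀ r ∈ Set.Icc (0:ℝ) 1, mlam ≤ lam r)
    (sf : ℝ) (hsf : 0 ≤ sf)
    (xhat ξhat : ℝ → ℝ)
    (hxr : ∀ s ∈ Set.Icc 0 sf, xhat s ∈ Set.Icc (0:ℝ) 1)
    (hξr : ∀ s ∈ Set.Icc 0 sf, ξhat s ∈ Set.Icc (0:ℝ) 1)
    (hxd : ∀ s ∈ Set.Icc 0 sf,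
      HasDerivWithinAt xhat (-(mu (xhat s))) (Set.Icc 0 sf) s)
    (hξd : ∀ s ∈ Set.Icc 0 sf,
      HasDerivWithinAt ξhat (lam (ξhat s)) (Set.Icc 0 sf) s)
    (Φ : ℝ → ℝ → ℝ)
    (hΦ : ∀ a b : ℝ, Φ a b =
      Real.exp (a * Real.exp (-γ * ε)) - Real.exp (b * Real.exp (γ * ε)) +
        Real.exp (Real.exp γ)) :
    (∀ s ∈ Set.Icc 0 sf, 0 ≤ Φ (xhat s) (ξhat s)) ∧
    ∀ ℓ : ℕ, ∫ s in (0:ℝ)..sf, (Φ (xhat s) (ξhat s)) ^ ℓ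
      ≤ (Real.exp γ / (mmu + mlam)) * (Φ (xhat 0) (ξhat 0)) ^ (ℓ + 1) / (ℓ + 1) :=
  stmt_14_general γ ε mmu mlam hγ hε hmmu hmlam mu lam hmub hlamb sf hsf xhat ξhat hxr hξr hxd hξd Φ
    hΦ
end

section
/- Let γ > 0, ε ∈ {−1, 1}, and 0 < m_μ ≤ M_μ with M_μ/m_μ < exp(2γ − e^{−γ}), and let μ₁, μ₂ : [0,1] → ℝ be continuous with m_μ ≤ μᵢ(r) ≤ M_μ for all r ∈ [0,1] and i ∈ {1,2}. Let s_F ≥ 0 and let χ̂, ζ̂ : [0, s_F] → [0,1] be differentiable with χ̂'(s) = ε μ₁(χ̂(s)) and ζ̂'(s) = ε μ₂(ζ̂(s)) for all s. Define Φ(a,b) = exp(a e^{−γε}) − exp(b e^{γε}) + exp(e^γ). Then m_μ e^γ − M_μ e^{e^{−γ} − γ} > 0, and for every integer ℓ ≥ 0: ∫₀^{s_F} Φ(χ̂(s), ζ̂(s))^ℓ ds ≤ Φ(χ̂(0), ζ̂(0))^{ℓ+1} / ((m_μ e^γ − M_μ e^{e^{−γ} − γ})(ℓ+1)). -/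
/-! Along the characteristics the weight `g(s) = Φ(χ̂(s), ζ̂(s))` stays nonnegative and decreases
at rate at least `c = m_μ e^γ − M_μ e^{e^{−γ}−γ}`: of the two exponentials in `Φ`, the one whose
exponent carries the factor `e^γ` always decreases and dominates the other. Hence
`(g^{ℓ+1})' = (ℓ+1) g^ℓ g' ≤ −c (ℓ+1) g^ℓ`, and integrating over `[0, s_F]` gives the bound. -/

open Real Set

theorem integral_pow_le_of_hasDerivAt_le_neg {g g' : ℝ → ℝ} {a b c : ℝ} (hab : a ≤ b)
    (hc : 0 < c) (hg_cont : ContinuousOn g (Icc a b))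
    (hg_deriv : ∀ s ∈ Ioo a b, HasDerivAt g (g' s) s)
    (hg_nonneg : ∀ s ∈ Icc a b, 0 ≤ g s) (hg'_le : ∀ s ∈ Ioo a b, g' s ≤ -c) (ℓ : ℕ) :
    ∫ s in a..b, g s ^ ℓ ≤ g a ^ (ℓ + 1) / (c * (ℓ + 1)) := by
  have hpow_deriv : ∀ s ∈ Ioo a b,
      HasDerivWithinAt (fun s => g s ^ (ℓ + 1)) ((ℓ + 1 : ℕ) * g s ^ ℓ * g' s) (Ioi s) s :=
    fun s hs => ((hg_deriv s hs).pow (ℓ + 1)).hasDerivWithinAt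
  have hdecay : g b ^ (ℓ + 1) - g a ^ (ℓ + 1) ≤ ∫ s in a..b, -(c * (ℓ + 1)) * g s ^ ℓ := by
    refine intervalIntegral.sub_le_integral_of_hasDeriv_right_of_le hab (hg_cont.pow _)
      hpow_deriv ((continuousOn_const.mul (hg_cont.pow ℓ)).integrableOn_compact isCompact_Icc)
      fun s hs => ?_
    have hgs : 0 ≤ (ℓ + 1 : ℝ) * g s ^ ℓ :=
      mul_nonneg (by positivity) (pow_nonneg (hg_nonneg s (Ioo_subset_Icc_self hs)) ℓ)
    push_cast
    nlinarith [hg'_le s hs]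
  have hgb : 0 ≤ g b ^ (ℓ + 1) := pow_nonneg (hg_nonneg b ⟨hab, le_rfl⟩) _
  rw [intervalIntegral.integral_const_mul] at hdecay
  rw [le_div_iff₀ (by positivity)]
  linarith

noncomputable def decayRate (γ m M : ℝ) : ℝ := m * exp γ - M * exp (exp (-γ) - γ)

theorem decayRate_pos {γ m M : ℝ} (hm : 0 < m) (hratio : M / m < exp (2 * γ - exp (-γ))) :
    0 < decayRate γ m M := by
  rw [decayRate]
  have hM : M * exp (exp (-γ) - γ) < exp (2 * γ - exp (-γ)) * m * exp (exp (-γ) - γ) :=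
    mul_lt_mul_of_pos_right ((div_lt_iff₀ hm).mp hratio) (exp_pos _)
  have hexp : exp (2 * γ - exp (-γ)) * exp (exp (-γ) - γ) = exp γ := by
    rw [← exp_add]; ring_nf
  linarith [show exp (2 * γ - exp (-γ)) * m * exp (exp (-γ) - γ) = m * exp γ by
    rw [← hexp]; ring]

theorem exp_mul_mul_le_of_le_one {t x μ M : ℝ} (ht : 0 ≤ t) (hx : x ≤ 1) (hμ : 0 ≤ μ)
    (hμM : μ ≤ M) : exp (x * t) * (μ * t) ≤ exp t * (M * t) :=
  mul_le_mul (exp_le_exp.mpr (mul_le_of_le_one_left ht hx))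
    (mul_le_mul_of_nonneg_right hμM ht) (mul_nonneg hμ ht) (exp_pos _).le

theorem mul_le_exp_mul_mul_of_nonneg {t x μ m : ℝ} (ht : 0 ≤ t) (hx : 0 ≤ x) (hm : 0 ≤ m)
    (hmμ : m ≤ μ) : m * t ≤ exp (x * t) * (μ * t) :=
  calc m * t ≤ 1 * (μ * t) := by rw [one_mul]; exact mul_le_mul_of_nonneg_right hmμ ht
    _ ≤ exp (x * t) * (μ * t) :=
      mul_le_mul_of_nonneg_right (one_le_exp (mul_nonneg hx ht)) (mul_nonneg (hm.trans hmμ) ht)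

theorem exp_sub_exp_add_exp_exp_nonneg {γ ε x y : ℝ} (hγ : 0 ≤ γ) (hε : ε ≤ 1) (hy : y ≤ 1) :
    0 ≤ exp (x * exp (-γ * ε)) - exp (y * exp (γ * ε)) + exp (exp γ) := by
  have hexp : exp (y * exp (γ * ε)) ≤ exp (exp γ) :=
    exp_le_exp.mpr <| (mul_le_of_le_one_left (exp_pos _).le hy).trans <|
      exp_le_exp.mpr (by nlinarith)
  linarith [exp_pos (x * exp (-γ * ε))]

theorem exp_mul_sub_exp_mul_le_neg_decayRate {γ ε m M μ₁ μ₂ x y : ℝ} (hε : ε = -1 ∨ ε = 1)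
    (hm : 0 ≤ m) (hx : x ∈ Icc (0 : ℝ) 1) (hy : y ∈ Icc (0 : ℝ) 1)
    (hμ₁ : m ≤ μ₁ ∧ μ₁ ≤ M) (hμ₂ : m ≤ μ₂ ∧ μ₂ ≤ M) :
    exp (x * exp (-γ * ε)) * (ε * μ₁ * exp (-γ * ε))
        - exp (y * exp (γ * ε)) * (ε * μ₂ * exp (γ * ε))
      ≤ -decayRate γ m M := by
  rw [decayRate]
  have hM_exp : M * exp (exp (-γ) - γ) = exp (exp (-γ)) * (M * exp (-γ)) := by
    rw [exp_sub, exp_neg γ]; ring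
  rcases hε with rfl | rfl
  · have hlow := mul_le_exp_mul_mul_of_nonneg (exp_pos γ).le hx.1 hm hμ₁.1
    have hup := exp_mul_mul_le_of_le_one (exp_pos (-γ)).le hy.2 (hm.trans hμ₂.1) hμ₂.2
    simp only [mul_neg_one, neg_neg] at hlow hup ⊢
    linarith
  · have hlow := mul_le_exp_mul_mul_of_nonneg (exp_pos γ).le hy.1 hm hμ₂.1
    have hup := exp_mul_mul_le_of_le_one (exp_pos (-γ)).le hx.2 (hm.trans hμ₁.1) hμ₁.2
    simp only [mul_one, one_mul] at hlow hup ⊢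
    linarith

theorem stmt_15_general (γ ε mmu Mmu : ℝ) (hγ : 0 < γ) (hε : ε = -1 ∨ ε = 1)
    (hmmu : 0 < mmu)
    (hratio : Mmu / mmu < Real.exp (2 * γ - Real.exp (-γ)))
    (mu₁ mu₂ : ℝ → ℝ)
    (hmu₁b : ∀ r ∈ Set.Icc (0:ℝ) 1, mmu ≤ mu₁ r ∧ mu₁ r ≤ Mmu)
    (hmu₂b : ∀ r ∈ Set.Icc (0:ℝ) 1, mmu ≤ mu₂ r ∧ mu₂ r ≤ Mmu)
    (sF : ℝ) (hsF : 0 ≤ sF)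
    (χhat ζhat : ℝ → ℝ)
    (hχr : ∀ s ∈ Set.Icc 0 sF, χhat s ∈ Set.Icc (0:ℝ) 1)
    (hζr : ∀ s ∈ Set.Icc 0 sF, ζhat s ∈ Set.Icc (0:ℝ) 1)
    (hχd : ∀ s ∈ Set.Icc 0 sF,
      HasDerivWithinAt χhat (ε * mu₁ (χhat s)) (Set.Icc 0 sF) s)
    (hζd : ∀ s ∈ Set.Icc 0 sF,
      HasDerivWithinAt ζhat (ε * mu₂ (ζhat s)) (Set.Icc 0 sF) s)
    (Φ : ℝ → ℝ → ℝ)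
    (hΦ : ∀ a b : ℝ, Φ a b =
      Real.exp (a * Real.exp (-γ * ε)) - Real.exp (b * Real.exp (γ * ε)) +
        Real.exp (Real.exp γ)) :
    0 < mmu * Real.exp γ - Mmu * Real.exp (Real.exp (-γ) - γ) ∧
    ∀ ℓ : ℕ, ∫ s in (0:ℝ)..sF, (Φ (χhat s) (ζhat s)) ^ ℓ
      ≤ (Φ (χhat 0) (ζhat 0)) ^ (ℓ + 1) /
          ((mmu * Real.exp γ - Mmu * Real.exp (Real.exp (-γ) - γ)) * (ℓ + 1)) := by
  have hc := decayRate_pos hmmu hratio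
  refine ⟨hc, fun ℓ => integral_pow_le_of_hasDerivAt_le_neg (g := fun s => Φ (χhat s) (ζhat s))
    (g' := fun s => exp (χhat s * exp (-γ * ε)) * (ε * mu₁ (χhat s) * exp (-γ * ε))
      - exp (ζhat s * exp (γ * ε)) * (ε * mu₂ (ζhat s) * exp (γ * ε)))
    hsF hc ?_ (fun s hs => ?_) (fun s hs => ?_) (fun s hs => ?_) ℓ⟩
  · simp only [hΦ]
    exact fun s hs => ((((hχd s hs).mul_const _).exp.sub ((hζd s hs).mul_const _).exp).add_const
      _).continuousWithinAt
  · have hnhds : Icc 0 sF ∈ nhds s := Icc_mem_nhds hs.1 hs.2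
    simp only [hΦ]
    exact ((((hχd s (Ioo_subset_Icc_self hs)).hasDerivAt hnhds).mul_const _).exp.sub
      (((hζd s (Ioo_subset_Icc_self hs)).hasDerivAt hnhds).mul_const _).exp).add_const _
  · rw [hΦ]
    exact exp_sub_exp_add_exp_exp_nonneg hγ.le (by rcases hε with rfl | rfl <;> norm_num)
      (hζr s hs).2
  · have hs' := Ioo_subset_Icc_self hs
    exact exp_mul_sub_exp_mul_le_neg_decayRate hε hmmu.le (hχr s hs') (hζr s hs')
      (hmu₁b _ (hχr s hs')) (hmu₂b _ (hζr s hs'))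

/-- along the characteristic projections `χ̂' = ε μ₁(χ̂)`,
`ζ̂' = ε μ₂(ζ̂)` of the L-kernel equation, with `0 < m_μ ≤ μᵢ ≤ M_μ` and
`M_μ/m_μ < exp(2γ − e^{−γ})`, the constant `m_μ e^γ − M_μ e^{e^{−γ}−γ}` is
positive and the weight `Φ(a,b) = exp(a e^{−γε}) − exp(b e^{γε}) + exp(e^γ)`
satisfies, for every integer `ℓ ≥ 0`,
`∫₀^{s_F} Φ(χ̂(s),ζ̂(s))^ℓ ds ≤ Φ(χ̂(0),ζ̂(0))^{ℓ+1}/((m_μ e^γ − M_μ e^{e^{−γ}−γ})(ℓ+1))`. -/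
theorem stmt_15 (γ ε mmu Mmu : ℝ) (hγ : 0 < γ) (hε : ε = -1 ∨ ε = 1)
    (hmmu : 0 < mmu) (hmM : mmu ≤ Mmu)
    (hratio : Mmu / mmu < Real.exp (2 * γ - Real.exp (-γ)))
    (mu₁ mu₂ : ℝ → ℝ)
    (hmu₁c : ContinuousOn mu₁ (Set.Icc (0:ℝ) 1))
    (hmu₂c : ContinuousOn mu₂ (Set.Icc (0:ℝ) 1))
    (hmu₁b : ∀ r ∈ Set.Icc (0:ℝ) 1, mmu ≤ mu₁ r ∧ mu₁ r ≤ Mmu)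
    (hmu₂b : ∀ r ∈ Set.Icc (0:ℝ) 1, mmu ≤ mu₂ r ∧ mu₂ r ≤ Mmu)
    (sF : ℝ) (hsF : 0 ≤ sF)
    (χhat ζhat : ℝ → ℝ)
    (hχr : ∀ s ∈ Set.Icc 0 sF, χhat s ∈ Set.Icc (0:ℝ) 1)
    (hζr : ∀ s ∈ Set.Icc 0 sF, ζhat s ∈ Set.Icc (0:ℝ) 1)
    (hχd : ∀ s ∈ Set.Icc 0 sF,
      HasDerivWithinAt χhat (ε * mu₁ (χhat s)) (Set.Icc 0 sF) s)
    (hζd : ∀ s ∈ Set.Icc 0 sF,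
      HasDerivWithinAt ζhat (ε * mu₂ (ζhat s)) (Set.Icc 0 sF) s)
    (Φ : ℝ → ℝ → ℝ)
    (hΦ : ∀ a b : ℝ, Φ a b =
      Real.exp (a * Real.exp (-γ * ε)) - Real.exp (b * Real.exp (γ * ε)) +
        Real.exp (Real.exp γ)) :
    0 < mmu * Real.exp γ - Mmu * Real.exp (Real.exp (-γ) - γ) ∧
    ∀ ℓ : ℕ, ∫ s in (0:ℝ)..sF, (Φ (χhat s) (ζhat s)) ^ ℓ
      ≤ (Φ (χhat 0) (ζhat 0)) ^ (ℓ + 1) /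
          ((mmu * Real.exp γ - Mmu * Real.exp (Real.exp (-γ) - γ)) * (ℓ + 1)) :=
  stmt_15_general γ ε mmu Mmu hγ hε hmmu hratio mu₁ mu₂ hmu₁b hmu₂b sF hsF χhat ζhat hχr hζr hχd hζd
    Φ hΦ
end

section
/- Let 𝒯 = {(x,ξ) ∈ [0,1]² : ξ ≤ x}, and let L : [0,1]⁴ → ℝ be measurable such that for every (x,ξ) ∈ 𝒯 the function L(x,ξ,·,·) lies in L²([0,1]²;ℝ) with ‖L(x,ξ,·,·)‖_{L²([0,1]²)} ≤ M for a fixed constant M ≥ 0. Define iterated kernels by L₁(x,ξ,η) = ∫₀¹ L(x,ξ,η,ζ) dζ and, for ℓ ≥ 2, L_ℓ(x,ξ,η) = ∫_ξ^x ∫₀¹ L(x,s,η,ζ) L_{ℓ−1}(s,ξ,ζ) dζ ds. Then for every integer ℓ ≥ 1 and every (x,ξ) ∈ 𝒯: ‖L_ℓ(x,ξ,·)‖_{L²([0,1])} ≤ M^ℓ (x−ξ)^{ℓ−1} / (ℓ−1)!. -/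
/-!
Induction on `ℓ`, propagating `‖L_ℓ(s,ξ,·)‖ ≤ C (s-ξ)^ℓ` with `C = M^{ℓ+1}/ℓ!`.
Pointwise `|L_{ℓ+1}(x,ξ,η)| ≤ ∫_ξ^x g(s,η) ds` with `g(s,η) = ∫ |L(x,s,η,ζ)| |L_ℓ(s,ξ,ζ)| dζ`.
Cauchy–Schwarz in `s` with the weight `(s-ξ)^ℓ` gives
`(∫ g ds)² ≤ (x-ξ)^{ℓ+1}/(ℓ+1) · ∫ g²/(s-ξ)^ℓ ds`, and Cauchy–Schwarz in `ζ` together with the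
kernel bound gives `∫ g(s,η)² dη ≤ M² C² (s-ξ)^{2ℓ}`; integrating over `s` then yields a second
factor `(x-ξ)^{ℓ+1}/(ℓ+1)`, whence `(ℓ+1)!`. All estimates are made for lower Lebesgue integrals
of `‖·‖ₑ²`, where Tonelli and Cauchy–Schwarz need no integrability.
-/

open MeasureTheory Set Filter

/-- The Volterra iterates of the backstepping kernel `L`:
`Lit L 0 = L₁` with `L₁(x,ξ,η) = ∫₀¹ L(x,ξ,η,ζ) dζ`, and
`Lit L ℓ = L_{ℓ+1}` with `L_{ℓ+1}(x,ξ,η) = ∫_ξ^x ∫₀¹ L(x,s,η,ζ) L_ℓ(s,ξ,ζ) dζ ds`. -/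
noncomputable def Lit (L : ℝ → ℝ → ℝ → ℝ → ℝ) : ℕ → ℝ → ℝ → ℝ → ℝ
  | 0 => fun x ξ η => ∫ ζ in (0:ℝ)..1, L x ξ η ζ
  | (ℓ + 1) => fun x ξ η => ∫ s in ξ..x, ∫ ζ in (0:ℝ)..1, L x s η ζ * Lit L ℓ s ξ ζ

open scoped ENNReal

theorem Measurable.intervalIntegral_prod_right {α : Type*} [MeasurableSpace α]
    {G : α → ℝ → ℝ} (hG : Measurable fun q : α × ℝ => G q.1 q.2) {a b : α → ℝ}
    (ha : Measurable a) (hb : Measurable b) :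
    Measurable fun p => ∫ s in a p..b p, G p s := by
  have hIoc : ∀ {a b : α → ℝ}, Measurable a → Measurable b →
      Measurable fun p => ∫ s in Ioc (a p) (b p), G p s := by
    intro a b ha hb
    simp_rw [← integral_indicator measurableSet_Ioc]
    refine (StronglyMeasurable.integral_prod_right'
      (f := fun q : α × ℝ => (Ioc (a q.1) (b q.1)).indicator (G q.1) q.2) ?_).measurable
    have hset : MeasurableSet {q : α × ℝ | q.2 ∈ Ioc (a q.1) (b q.1)} :=
      (measurableSet_lt (ha.comp measurable_fst) measurable_snd).inter
        (measurableSet_le measurable_snd (hb.comp measurable_fst))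
    exact (hG.indicator hset).stronglyMeasurable
  exact (hIoc ha hb).sub (hIoc hb ha)

theorem Measurable.comp₄ {β₁ β₂ β₃ β₄ γ : Type*} [MeasurableSpace β₁] [MeasurableSpace β₂]
    [MeasurableSpace β₃] [MeasurableSpace β₄] [MeasurableSpace γ] {L : β₁ → β₂ → β₃ → β₄ → γ}
    (hL : Measurable fun p : β₁ × β₂ × β₃ × β₄ => L p.1 p.2.1 p.2.2.1 p.2.2.2)
    {α : Type*} [MeasurableSpace α] {f : α → β₁} {g : α → β₂} {h : α → β₃} {k : α → β₄}
    (hf : Measurable f) (hg : Measurable g) (hh : Measurable h) (hk : Measurable k) :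
    Measurable fun a => L (f a) (g a) (h a) (k a) :=
  hL.comp (hf.prodMk (hg.prodMk (hh.prodMk hk)))

theorem measurable_lit {L : ℝ → ℝ → ℝ → ℝ → ℝ}
    (hL : Measurable fun p : ℝ × ℝ × ℝ × ℝ => L p.1 p.2.1 p.2.2.1 p.2.2.2) (ℓ : ℕ)
    {α : Type*} [MeasurableSpace α] {x ξ η : α → ℝ}
    (hx : Measurable x) (hξ : Measurable ξ) (hη : Measurable η) :
    Measurable fun p => Lit L ℓ (x p) (ξ p) (η p) := by
  induction ℓ generalizing α with
  | zero =>
    exact Measurable.intervalIntegral_prod_right (G := fun p => L (x p) (ξ p) (η p))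
      (hL.comp₄ (by fun_prop) (by fun_prop) (by fun_prop) (by fun_prop))
      measurable_const measurable_const
  | succ ℓ ih =>
    refine Measurable.intervalIntegral_prod_right ?_ hξ hx
    refine Measurable.intervalIntegral_prod_right ?_ measurable_const measurable_const
    exact (hL.comp₄ (by fun_prop) (by fun_prop) (by fun_prop) (by fun_prop)).mul
      (ih (by fun_prop) (by fun_prop) (by fun_prop))

section Lebesgue

variable {α : Type*} [MeasurableSpace α] {μ : Measure α}

theorem lintegral_mul_sq_le {f g : α → ℝ≥0∞} (hf : AEMeasurable f μ) (hg : AEMeasurable g μ) :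
    (∫⁻ a, f a * g a ∂μ) ^ 2 ≤ (∫⁻ a, f a ^ 2 ∂μ) * ∫⁻ a, g a ^ 2 ∂μ := by
  have h := ENNReal.lintegral_mul_le_Lp_mul_Lq μ Real.HolderConjugate.two_two hf hg
  simp only [ENNReal.rpow_two, Pi.mul_apply] at h
  calc (∫⁻ a, f a * g a ∂μ) ^ 2
      ≤ ((∫⁻ a, f a ^ 2 ∂μ) ^ (1 / 2 : ℝ) * (∫⁻ a, g a ^ 2 ∂μ) ^ (1 / 2 : ℝ)) ^ 2 := by
        gcongr
    _ = (∫⁻ a, f a ^ 2 ∂μ) * ∫⁻ a, g a ^ 2 ∂μ := by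
        rw [mul_pow, ← ENNReal.rpow_two, ← ENNReal.rpow_two, ← ENNReal.rpow_mul,
          ← ENNReal.rpow_mul]
        norm_num

theorem lintegral_sq_le_lintegral_mul_lintegral_sq_div {f w : α → ℝ≥0∞}
    (hf : AEMeasurable f μ) (hw : AEMeasurable w μ)
    (hw₀ : ∀ᵐ a ∂μ, w a ≠ 0) (hw_top : ∀ᵐ a ∂μ, w a ≠ ∞) :
    (∫⁻ a, f a ∂μ) ^ 2 ≤ (∫⁻ a, w a ∂μ) * ∫⁻ a, f a ^ 2 / w a ∂μ := by
  set r : α → ℝ≥0∞ := fun a => w a ^ (1 / 2 : ℝ)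
  have hr_sq : ∀ a, r a ^ 2 = w a := fun a => by
    rw [← ENNReal.rpow_two, ← ENNReal.rpow_mul]; norm_num
  have hf_eq : (fun a => f a) =ᵐ[μ] fun a => r a * (f a / r a) := by
    filter_upwards [hw₀, hw_top] with a h₀ h_top
    refine (ENNReal.mul_div_cancel ?_ ?_).symm
    · simpa [r] using h₀
    · simpa [r] using h_top
  calc (∫⁻ a, f a ∂μ) ^ 2 = (∫⁻ a, r a * (f a / r a) ∂μ) ^ 2 := by rw [lintegral_congr_ae hf_eq]
    _ ≤ (∫⁻ a, r a ^ 2 ∂μ) * ∫⁻ a, (f a / r a) ^ 2 ∂μ :=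
        lintegral_mul_sq_le (hw.pow_const _) (hf.div (hw.pow_const _))
    _ = (∫⁻ a, w a ∂μ) * ∫⁻ a, f a ^ 2 / w a ∂μ := by
        simp only [div_eq_mul_inv, mul_pow, ← ENNReal.inv_pow, hr_sq]

theorem lintegral_sq_lintegral_mul_le {β : Type*} [MeasurableSpace β] {ν : Measure β} [SFinite ν]
    {k : α → β → ℝ≥0∞} {p : β → ℝ≥0∞} (hk : Measurable (Function.uncurry k))
    (hp : AEMeasurable p ν) :
    ∫⁻ a, (∫⁻ b, k a b * p b ∂ν) ^ 2 ∂μ ≤ (∫⁻ a, ∫⁻ b, k a b ^ 2 ∂ν ∂μ) * ∫⁻ b, p b ^ 2 ∂ν :=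
  calc ∫⁻ a, (∫⁻ b, k a b * p b ∂ν) ^ 2 ∂μ
      ≤ ∫⁻ a, (∫⁻ b, k a b ^ 2 ∂ν) * ∫⁻ b, p b ^ 2 ∂ν ∂μ :=
        lintegral_mono fun _ => lintegral_mul_sq_le (hk.comp measurable_prodMk_left).aemeasurable hp
    _ = (∫⁻ a, ∫⁻ b, k a b ^ 2 ∂ν ∂μ) * ∫⁻ b, p b ^ 2 ∂ν :=
        lintegral_mul_const'' _ (hk.pow_const 2).lintegral_prod_right'.aemeasurable

theorem ENNReal.ofReal_sq_eq_enorm_sq (x : ℝ) : ENNReal.ofReal (x ^ 2) = ‖x‖ₑ ^ 2 := by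
  rw [← sq_abs, ENNReal.ofReal_pow (abs_nonneg x), Real.enorm_eq_ofReal_abs]

theorem sqrt_integral_sq_le_of_lintegral_enorm_sq_le {f : α → ℝ} {R : ℝ} (hR : 0 ≤ R)
    (hf : AEStronglyMeasurable f μ)
    (h : ∫⁻ a, ‖f a‖ₑ ^ 2 ∂μ ≤ ENNReal.ofReal (R ^ 2)) :
    √(∫ a, f a ^ 2 ∂μ) ≤ R := by
  rw [Real.sqrt_le_left hR,
    integral_eq_lintegral_of_nonneg_ae (ae_of_all _ fun _ => sq_nonneg _) (hf.pow 2)]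
  simp_rw [ENNReal.ofReal_sq_eq_enorm_sq]
  exact ENNReal.toReal_le_of_le_ofReal (sq_nonneg R) h

end Lebesgue

theorem enorm_intervalIntegral_le_lintegral {f : ℝ → ℝ} {a b : ℝ} (hab : a ≤ b) :
    ‖∫ s in a..b, f s‖ₑ ≤ ∫⁻ s in Ioc a b, ‖f s‖ₑ := by
  rw [intervalIntegral.integral_of_le hab]
  exact enorm_integral_le_lintegral_enorm f

theorem enorm_intervalIntegral_sq_le {f : ℝ → ℝ} {a b : ℝ} (hab : a ≤ b)
    (hf : AEMeasurable f (volume.restrict (Ioc a b))) :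
    ‖∫ s in a..b, f s‖ₑ ^ 2 ≤ ENNReal.ofReal (b - a) * ∫⁻ s in Ioc a b, ‖f s‖ₑ ^ 2 :=
  calc ‖∫ s in a..b, f s‖ₑ ^ 2 ≤ (∫⁻ s in Ioc a b, 1 * ‖f s‖ₑ) ^ 2 := by
        simpa using pow_le_pow_left' (enorm_intervalIntegral_le_lintegral hab) 2
    _ ≤ (∫⁻ s in Ioc a b, 1 ^ 2) * ∫⁻ s in Ioc a b, ‖f s‖ₑ ^ 2 :=
        lintegral_mul_sq_le aemeasurable_const hf.enorm
    _ = ENNReal.ofReal (b - a) * ∫⁻ s in Ioc a b, ‖f s‖ₑ ^ 2 := by simp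

theorem lintegral_ofReal_sub_pow {a b : ℝ} (hab : a ≤ b) (n : ℕ) :
    ∫⁻ s in Ioc a b, ENNReal.ofReal ((s - a) ^ n)
      = ENNReal.ofReal ((b - a) ^ (n + 1) / (n + 1)) := by
  have hnonneg : 0 ≤ᵐ[volume.restrict (Ioc a b)] fun s => (s - a) ^ n :=
    (ae_restrict_iff' measurableSet_Ioc).2
      (ae_of_all _ fun s hs => pow_nonneg (sub_nonneg.2 hs.1.le) n)
  rw [← ofReal_integral_eq_lintegral_ofReal
    (by fun_prop : Continuous fun s : ℝ => (s - a) ^ n).integrableOn_Ioc hnonneg,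
    ← intervalIntegral.integral_of_le hab, intervalIntegral.integral_comp_sub_right (· ^ n),
    integral_pow]
  simp

theorem lintegral_sq_lintegral_Ioc_le {β : Type*} [MeasurableSpace β] {ν : Measure β} [SFinite ν]
    {g : ℝ → β → ℝ≥0∞} (hg : Measurable (Function.uncurry g)) {a b : ℝ} (hab : a ≤ b) (n : ℕ)
    {c : ℝ≥0∞} (hg_le : ∀ s ∈ Ioc a b, ∫⁻ η, g s η ^ 2 ∂ν ≤ c * ENNReal.ofReal ((s - a) ^ n) ^ 2) :
    ∫⁻ η, (∫⁻ s in Ioc a b, g s η) ^ 2 ∂ν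
      ≤ c * ENNReal.ofReal ((b - a) ^ (n + 1) / (n + 1)) ^ 2 := by
  set w : ℝ → ℝ≥0∞ := fun s => ENNReal.ofReal ((s - a) ^ n)
  have hw : Measurable w := by fun_prop
  have hw_int : ∫⁻ s in Ioc a b, w s = ENNReal.ofReal ((b - a) ^ (n + 1) / (n + 1)) :=
    lintegral_ofReal_sub_pow hab n
  have hw₀ : ∀ᵐ s ∂volume.restrict (Ioc a b), w s ≠ 0 := by
    refine (ae_restrict_iff' measurableSet_Ioc).2 (ae_of_all _ fun s hs => ?_)
    simpa [w] using pow_pos (sub_pos.2 hs.1) n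
  have hslice : ∀ s ∈ Ioc a b, ∫⁻ η, g s η ^ 2 / w s ∂ν ≤ c * w s := by
    intro s hs
    simp_rw [div_eq_mul_inv]
    have hgs : Measurable (g s) := hg.comp measurable_prodMk_left
    rw [lintegral_mul_const _ (hgs.pow_const 2), ← div_eq_mul_inv]
    exact ENNReal.div_le_of_le_mul ((hg_le s hs).trans_eq (by ring))
  calc ∫⁻ η, (∫⁻ s in Ioc a b, g s η) ^ 2 ∂ν
      ≤ ∫⁻ η, (∫⁻ s in Ioc a b, w s) * (∫⁻ s in Ioc a b, g s η ^ 2 / w s) ∂ν :=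
        lintegral_mono fun η => lintegral_sq_le_lintegral_mul_lintegral_sq_div
          (hg.comp measurable_prodMk_right).aemeasurable hw.aemeasurable hw₀
          (ae_of_all _ fun _ => ENNReal.ofReal_ne_top)
    _ = (∫⁻ s in Ioc a b, w s) * ∫⁻ s in Ioc a b, (∫⁻ η, g s η ^ 2 / w s ∂ν) := by
        rw [lintegral_const_mul' _ _ (hw_int ▸ ENNReal.ofReal_ne_top),
          lintegral_lintegral_swap ((hg.comp measurable_swap).pow_const 2 |>.div
            (hw.comp measurable_snd)).aemeasurable]
    _ ≤ (∫⁻ s in Ioc a b, w s) * ∫⁻ s in Ioc a b, c * w s :=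
        mul_le_mul' le_rfl (setLIntegral_mono (by fun_prop) hslice)
    _ = c * ENNReal.ofReal ((b - a) ^ (n + 1) / (n + 1)) ^ 2 := by
        rw [lintegral_const_mul _ hw, hw_int]
        ring

theorem lintegral_lintegral_enorm_sq_le_of_memLp {f : ℝ → ℝ → ℝ}
    (hf : MemLp (fun p : ℝ × ℝ => f p.1 p.2) 2
      (volume.restrict (Icc (0:ℝ) 1 ×ˢ Icc (0:ℝ) 1))) :
    ∫⁻ η in Ioc (0:ℝ) 1, ∫⁻ ζ in Ioc (0:ℝ) 1, ‖f η ζ‖ₑ ^ 2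
      ≤ ENNReal.ofReal (∫ η in (0:ℝ)..1, ∫ ζ in (0:ℝ)..1, f η ζ ^ 2) := by
  have hprod : ∀ s : Set ℝ,
      volume.restrict (s ×ˢ s) = (volume.restrict s).prod (volume.restrict s) :=
    fun s => by rw [Measure.prod_restrict, ← Measure.volume_eq_prod]
  have hIoc : Ioc (0:ℝ) 1 ×ˢ Ioc (0:ℝ) 1 ⊆ Icc (0:ℝ) 1 ×ˢ Icc (0:ℝ) 1 :=
    prod_mono Ioc_subset_Icc_self Ioc_subset_Icc_self
  have hint := hf.integrable_sq
  calc ∫⁻ η in Ioc (0:ℝ) 1, ∫⁻ ζ in Ioc (0:ℝ) 1, ‖f η ζ‖ₑ ^ 2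
      = ∫⁻ p in Ioc (0:ℝ) 1 ×ˢ Ioc (0:ℝ) 1, ‖f p.1 p.2‖ₑ ^ 2 := by
        have hmeas := (hf.1.mono_measure (Measure.restrict_mono hIoc le_rfl)).enorm.pow_const 2
        rw [hprod] at hmeas ⊢
        rw [lintegral_prod _ hmeas]
    _ ≤ ∫⁻ p in Icc (0:ℝ) 1 ×ˢ Icc (0:ℝ) 1, ‖f p.1 p.2‖ₑ ^ 2 := lintegral_mono_set hIoc
    _ = ENNReal.ofReal (∫ p in Icc (0:ℝ) 1 ×ˢ Icc (0:ℝ) 1, f p.1 p.2 ^ 2) := by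
        rw [ofReal_integral_eq_lintegral_ofReal hint (ae_of_all _ fun _ => sq_nonneg _)]
        simp_rw [ENNReal.ofReal_sq_eq_enorm_sq]
    _ = ENNReal.ofReal (∫ η in (0:ℝ)..1, ∫ ζ in (0:ℝ)..1, f η ζ ^ 2) := by
        rw [hprod] at hint ⊢
        simp_rw [integral_prod _ hint, intervalIntegral.integral_of_le zero_le_one,
          integral_Icc_eq_integral_Ioc]

theorem lintegral_enorm_sq_volterra_le {K : ℝ → ℝ → ℝ → ℝ} {P : ℝ → ℝ → ℝ}
    (hK : Measurable fun p : ℝ × ℝ × ℝ => K p.1 p.2.1 p.2.2)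
    (hP : Measurable fun p : ℝ × ℝ => P p.1 p.2) {a b M C : ℝ} (hab : a ≤ b) (n : ℕ)
    (hK_le : ∀ s ∈ Ioc a b,
      ∫⁻ η in Ioc (0:ℝ) 1, ∫⁻ ζ in Ioc (0:ℝ) 1, ‖K s η ζ‖ₑ ^ 2 ≤ ENNReal.ofReal (M ^ 2))
    (hP_le : ∀ s ∈ Ioc a b,
      ∫⁻ ζ in Ioc (0:ℝ) 1, ‖P s ζ‖ₑ ^ 2 ≤ ENNReal.ofReal ((C * (s - a) ^ n) ^ 2)) :
    ∫⁻ η in Ioc (0:ℝ) 1, ‖∫ s in a..b, ∫ ζ in (0:ℝ)..1, K s η ζ * P s ζ‖ₑ ^ 2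
      ≤ ENNReal.ofReal ((M * C * ((b - a) ^ (n + 1) / (n + 1))) ^ 2) := by
  set g : ℝ → ℝ → ℝ≥0∞ := fun s η => ∫⁻ ζ in Ioc (0:ℝ) 1, ‖K s η ζ‖ₑ * ‖P s ζ‖ₑ
  have hg : Measurable (Function.uncurry g) :=
    Measurable.lintegral_prod_right'
      ((hK.comp (by fun_prop : Measurable fun r : (ℝ × ℝ) × ℝ => (r.1.1, r.1.2, r.2))).enorm.mul
        (hP.comp (by fun_prop : Measurable fun r : (ℝ × ℝ) × ℝ => (r.1.1, r.2))).enorm)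
  have hV : ∀ η, ‖∫ s in a..b, ∫ ζ in (0:ℝ)..1, K s η ζ * P s ζ‖ₑ ≤ ∫⁻ s in Ioc a b, g s η :=
    fun η => (enorm_intervalIntegral_le_lintegral hab).trans <| lintegral_mono fun s =>
      (enorm_intervalIntegral_le_lintegral zero_le_one).trans_eq <| by simp only [g, enorm_mul]
  have hg_le : ∀ s ∈ Ioc a b, ∫⁻ η in Ioc (0:ℝ) 1, g s η ^ 2
      ≤ ENNReal.ofReal ((M * C) ^ 2) * ENNReal.ofReal ((s - a) ^ n) ^ 2 := by
    intro s hs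
    have hsa : 0 ≤ s - a := sub_nonneg.2 hs.1.le
    calc ∫⁻ η in Ioc (0:ℝ) 1, g s η ^ 2
        ≤ (∫⁻ η in Ioc (0:ℝ) 1, ∫⁻ ζ in Ioc (0:ℝ) 1, ‖K s η ζ‖ₑ ^ 2)
            * ∫⁻ ζ in Ioc (0:ℝ) 1, ‖P s ζ‖ₑ ^ 2 :=
          lintegral_sq_lintegral_mul_le
            (hK.comp (by fun_prop : Measurable fun r : ℝ × ℝ => (s, r.1, r.2))).enorm
            (hP.comp (by fun_prop : Measurable fun ζ : ℝ => (s, ζ))).enorm.aemeasurable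
      _ ≤ ENNReal.ofReal (M ^ 2) * ENNReal.ofReal ((C * (s - a) ^ n) ^ 2) :=
          mul_le_mul' (hK_le s hs) (hP_le s hs)
      _ = ENNReal.ofReal ((M * C) ^ 2) * ENNReal.ofReal ((s - a) ^ n) ^ 2 := by
          rw [← ENNReal.ofReal_pow (by positivity), ← ENNReal.ofReal_mul (sq_nonneg M),
            ← ENNReal.ofReal_mul (sq_nonneg _)]
          ring_nf
  calc ∫⁻ η in Ioc (0:ℝ) 1, ‖∫ s in a..b, ∫ ζ in (0:ℝ)..1, K s η ζ * P s ζ‖ₑ ^ 2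
      ≤ ∫⁻ η in Ioc (0:ℝ) 1, (∫⁻ s in Ioc a b, g s η) ^ 2 :=
        lintegral_mono fun η => pow_le_pow_left' (hV η) 2
    _ ≤ ENNReal.ofReal ((M * C) ^ 2) * ENNReal.ofReal ((b - a) ^ (n + 1) / (n + 1)) ^ 2 :=
        lintegral_sq_lintegral_Ioc_le hg hab n hg_le
    _ = ENNReal.ofReal ((M * C * ((b - a) ^ (n + 1) / (n + 1))) ^ 2) := by
        have := sub_nonneg.2 hab
        rw [← ENNReal.ofReal_pow (by positivity), ← ENNReal.ofReal_mul (sq_nonneg _)]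
        ring_nf

theorem lintegral_enorm_sq_lit_le {L : ℝ → ℝ → ℝ → ℝ → ℝ} {M : ℝ}
    (hL : Measurable fun p : ℝ × ℝ × ℝ × ℝ => L p.1 p.2.1 p.2.2.1 p.2.2.2)
    (hL_le : ∀ x ξ : ℝ, ξ ≤ x → x ∈ Icc (0:ℝ) 1 → ξ ∈ Icc (0:ℝ) 1 →
      ∫⁻ η in Ioc (0:ℝ) 1, ∫⁻ ζ in Ioc (0:ℝ) 1, ‖L x ξ η ζ‖ₑ ^ 2 ≤ ENNReal.ofReal (M ^ 2))
    (ℓ : ℕ) {x ξ : ℝ} (hξx : ξ ≤ x) (hx : x ∈ Icc (0:ℝ) 1) (hξ : ξ ∈ Icc (0:ℝ) 1) :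
    ∫⁻ η in Ioc (0:ℝ) 1, ‖Lit L ℓ x ξ η‖ₑ ^ 2
      ≤ ENNReal.ofReal ((M ^ (ℓ + 1) * (x - ξ) ^ ℓ / ℓ.factorial) ^ 2) := by
  induction ℓ generalizing x with
  | zero =>
    calc ∫⁻ η in Ioc (0:ℝ) 1, ‖Lit L 0 x ξ η‖ₑ ^ 2
        ≤ ∫⁻ η in Ioc (0:ℝ) 1, ∫⁻ ζ in Ioc (0:ℝ) 1, ‖L x ξ η ζ‖ₑ ^ 2 :=
          lintegral_mono fun η => (enorm_intervalIntegral_sq_le zero_le_one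
            (hL.comp₄ measurable_const measurable_const measurable_const
              measurable_id).aemeasurable).trans_eq (by simp)
      _ ≤ ENNReal.ofReal (M ^ 2) := hL_le x ξ hξx hx hξ
      _ = _ := by simp
  | succ ℓ ih =>
    have hstep := lintegral_enorm_sq_volterra_le (K := fun s η ζ => L x s η ζ)
      (P := fun s ζ => Lit L ℓ s ξ ζ) (M := M) (C := M ^ (ℓ + 1) / ℓ.factorial)
      (hL.comp₄ measurable_const (by fun_prop) (by fun_prop) (by fun_prop))
      (measurable_lit hL ℓ (by fun_prop) measurable_const (by fun_prop)) hξx ℓ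
      (fun s hs => hL_le x s hs.2 hx ⟨hξ.1.trans hs.1.le, hs.2.trans hx.2⟩)
      (fun s hs => by
        convert ih hs.1.le ⟨hξ.1.trans hs.1.le, hs.2.trans hx.2⟩ using 3
        ring)
    refine hstep.trans_eq (congrArg ENNReal.ofReal ?_)
    rw [Nat.factorial_succ]
    push_cast
    field_simp
    ring

/-- if the kernel `L` is measurable and uniformly `L²`-bounded in
its last two variables over the triangle `𝒯 = {ξ ≤ x} ∩ [0,1]²`, then the
Volterra iterates satisfy `‖L_ℓ(x,ξ,·)‖_{L²} ≤ M^ℓ (x−ξ)^{ℓ−1}/(ℓ−1)!` (here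
`Lit L ℓ = L_{ℓ+1}`, so the bound reads `M^{ℓ+1}(x−ξ)^ℓ/ℓ!`). -/
theorem stmt_16 (L : ℝ → ℝ → ℝ → ℝ → ℝ) (M : ℝ) (hM : 0 ≤ M)
    (hmeas : Measurable (fun p : ℝ × ℝ × ℝ × ℝ => L p.1 p.2.1 p.2.2.1 p.2.2.2))
    (hL2 : ∀ x ξ : ℝ, ξ ≤ x → x ∈ Set.Icc (0:ℝ) 1 → ξ ∈ Set.Icc (0:ℝ) 1 →
      MeasureTheory.MemLp (fun p : ℝ × ℝ => L x ξ p.1 p.2) 2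
        (MeasureTheory.volume.restrict ((Set.Icc (0:ℝ) 1) ×ˢ (Set.Icc (0:ℝ) 1))) ∧
      Real.sqrt (∫ η in (0:ℝ)..1, ∫ ζ in (0:ℝ)..1, (L x ξ η ζ) ^ 2) ≤ M) :
    ∀ ℓ : ℕ, ∀ x ξ : ℝ, ξ ≤ x → x ∈ Set.Icc (0:ℝ) 1 → ξ ∈ Set.Icc (0:ℝ) 1 →
      Real.sqrt (∫ η in (0:ℝ)..1, (Lit L ℓ x ξ η) ^ 2)
        ≤ M ^ (ℓ + 1) * (x - ξ) ^ ℓ / (Nat.factorial ℓ) := by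
  intro ℓ x ξ hξx hx hξ
  have hL_le : ∀ x ξ : ℝ, ξ ≤ x → x ∈ Icc (0:ℝ) 1 → ξ ∈ Icc (0:ℝ) 1 →
      ∫⁻ η in Ioc (0:ℝ) 1, ∫⁻ ζ in Ioc (0:ℝ) 1, ‖L x ξ η ζ‖ₑ ^ 2 ≤ ENNReal.ofReal (M ^ 2) := by
    intro x ξ hξx hx hξ
    obtain ⟨hmem, hsqrt_le⟩ := hL2 x ξ hξx hx hξ
    exact (lintegral_lintegral_enorm_sq_le_of_memLp hmem).trans
      (ENNReal.ofReal_le_ofReal (Real.sqrt_le_iff.1 hsqrt_le).2)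
  have hR : 0 ≤ M ^ (ℓ + 1) * (x - ξ) ^ ℓ / ℓ.factorial := by
    have := sub_nonneg.2 hξx
    positivity
  rw [intervalIntegral.integral_of_le zero_le_one]
  exact sqrt_integral_sq_le_of_lintegral_enorm_sq_le hR
    (measurable_lit hmeas ℓ measurable_const measurable_const measurable_id).aestronglyMeasurable
    (lintegral_enorm_sq_lit_le hmeas hL_le ℓ hξx hx hξ)
end
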